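/- With q, p ∈ ℝ³, q ≠ 0, L = q × p with L ≠ 0, and e = p × L − q/|q|, the momentum satisfies |p − (L × e)/|L|²|² = 1/|L|². Hence p lies on a circle (sphere intersected with the plane perpendicular to L) of radius 1/|L| centered at (L × e)/|L|². -/

import Mathlib

/-!
Since `L = q × p` is orthogonal to `p`, the triple product expansion gives `L × (p × L) = ‖L‖² p`,
so `p - (L × e) / ‖L‖² = (L × q) / (‖L‖² ‖q‖)`. As `L ⟂ q` as well, Lagrange's identity gives
`‖L × q‖ = ‖L‖ ‖q‖`, and the squared norm is `1 / ‖L‖²`.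
-/

noncomputable section

/-- Cross product on `EuclideanSpace ℝ (Fin 3)`. -/
def cross (a b : EuclideanSpace ℝ (Fin 3)) : EuclideanSpace ℝ (Fin 3) :=
  (WithLp.equiv 2 (Fin 3 → ℝ)).symm
    ![a 1 * b 2 - a 2 * b 1, a 2 * b 0 - a 0 * b 2, a 0 * b 1 - a 1 * b 0]

open Matrix RealInnerProductSpace

namespace EuclideanSpace

theorem real_inner_eq_dotProduct {ι : Type*} [Fintype ι] (x y : EuclideanSpace ℝ ι) :
    ⟪x, y⟫ = x.ofLp ⬝ᵥ y.ofLp := by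
  rw [inner_eq_star_dotProduct, star_trivial, dotProduct_comm]

end EuclideanSpace

open EuclideanSpace

theorem cross_eq_toLp_crossProduct (a b : EuclideanSpace ℝ (Fin 3)) :
    cross a b = WithLp.toLp 2 (a.ofLp ⨯₃ b.ofLp) := rfl

theorem zero_cross (b : EuclideanSpace ℝ (Fin 3)) : cross 0 b = 0 := by
  simp [cross_eq_toLp_crossProduct]

theorem cross_sub (a b c : EuclideanSpace ℝ (Fin 3)) :
    cross a (b - c) = cross a b - cross a c := by
  simp [cross_eq_toLp_crossProduct]

theorem cross_smul (a b : EuclideanSpace ℝ (Fin 3)) (r : ℝ) :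
    cross a (r • b) = r • cross a b := by
  simp [cross_eq_toLp_crossProduct]

theorem inner_cross_self (a b : EuclideanSpace ℝ (Fin 3)) : ⟪cross a b, b⟫ = 0 := by
  rw [real_inner_eq_dotProduct, dotProduct_comm]
  exact dot_cross_self a.ofLp b.ofLp

theorem inner_self_cross (a b : EuclideanSpace ℝ (Fin 3)) : ⟪cross a b, a⟫ = 0 := by
  rw [real_inner_eq_dotProduct, dotProduct_comm]
  exact dot_self_cross a.ofLp b.ofLp

theorem cross_cross_eq_inner_smul_sub_inner_smul (u v w : EuclideanSpace ℝ (Fin 3)) :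
    cross u (cross v w) = ⟪u, w⟫ • v - ⟪v, u⟫ • w := by
  rw [cross_eq_toLp_crossProduct, cross_eq_toLp_crossProduct, WithLp.ofLp_toLp,
    cross_cross_eq_smul_sub_smul', real_inner_eq_dotProduct, real_inner_eq_dotProduct]
  rfl

theorem norm_cross_sq (u v : EuclideanSpace ℝ (Fin 3)) :
    ‖cross u v‖ ^ 2 = ‖u‖ ^ 2 * ‖v‖ ^ 2 - ⟪u, v⟫ ^ 2 := by
  simp only [← real_inner_self_eq_norm_sq, real_inner_eq_dotProduct, cross_eq_toLp_crossProduct,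
    cross_dot_cross, dotProduct_comm v.ofLp u.ofLp]
  ring

theorem cross_cross_self_of_inner_eq_zero {u v : EuclideanSpace ℝ (Fin 3)} (h : ⟪u, v⟫ = 0) :
    cross u (cross v u) = ‖u‖ ^ 2 • v := by
  rw [cross_cross_eq_inner_smul_sub_inner_smul, real_inner_self_eq_norm_sq, real_inner_comm, h,
    zero_smul, sub_zero]

theorem momentum_on_circle_general
    (q p : EuclideanSpace ℝ (Fin 3))
    (L e : EuclideanSpace ℝ (Fin 3))
    (hL : L = cross q p) (hLne : L ≠ 0)
    (he : e = cross p L - ‖q‖⁻¹ • q) :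
    ‖p - (‖L‖ ^ 2)⁻¹ • cross L e‖ ^ 2 = (‖L‖ ^ 2)⁻¹ := by
  have hLp : ⟪L, p⟫ = 0 := hL ▸ inner_cross_self q p
  have hLq : ⟪L, q⟫ = 0 := hL ▸ inner_self_cross q p
  have hq : ‖q‖ ≠ 0 := norm_ne_zero_iff.mpr <| by
    rintro rfl
    exact hLne (hL.trans (zero_cross p))
  have hL2 : ‖L‖ ^ 2 ≠ 0 := by positivity
  have hcenter : p - (‖L‖ ^ 2)⁻¹ • cross L e = ((‖L‖ ^ 2)⁻¹ * ‖q‖⁻¹) • cross L q := by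
    rw [he, cross_sub, cross_smul, cross_cross_self_of_inner_eq_zero hLp, smul_sub, smul_smul,
      inv_mul_cancel₀ hL2, one_smul, sub_sub_cancel, smul_smul]
  rw [hcenter, norm_smul, mul_pow, norm_cross_sq, hLq, Real.norm_eq_abs, sq_abs]
  field_simp
  ring

/-- Hamilton's theorem: the momentum lies on a circle of radius `1/|L|`
centered at `(L × e)/|L|²`. -/
theorem momentum_on_circle
    (q p : EuclideanSpace ℝ (Fin 3)) (hq : q ≠ 0)
    (L e : EuclideanSpace ℝ (Fin 3))
    (hL : L = cross q p) (hLne : L ≠ 0)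
    (he : e = cross p L - ‖q‖⁻¹ • q) :
    ‖p - (‖L‖ ^ 2)⁻¹ • cross L e‖ ^ 2 = (‖L‖ ^ 2)⁻¹ :=
  momentum_on_circle_general q p L e hL hLne he
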